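/- Fix integers m ≥ 1 and k_1, ..., k_m with each k_i ≥ 2, and set n = k_1 + ... + k_m. Then for the graph G = D_n(k_1, ..., k_m), the set Shed(G) is not a dominating set of G. -/

import Mathlib

open scoped Classical

variable {V : Type*}

/-- `S` is an independent set of the induced subgraph of `G` on the vertex set `A`. -/
def IsIndepIn (G : SimpleGraph V) (A S : Finset V) : Prop :=
  S ⊆ A ∧ ∀ u ∈ S, ∀ v ∈ S, ¬ G.Adj u v

/-- `S` is a maximal independent set of the induced subgraph of `G` on the vertex set `A`. -/
def IsMaxIndepIn (G : SimpleGraph V) (A S : Finset V) : Prop :=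
  IsIndepIn G A S ∧ ∀ T, IsIndepIn G A T → S ⊆ T → T = S

/-- The induced subgraph of `G` on the vertex set `A` is well-covered: all of its
maximal independent sets have the same cardinality. -/
def WellCoveredOn (G : SimpleGraph V) (A : Finset V) : Prop :=
  ∀ S T, IsMaxIndepIn G A S → IsMaxIndepIn G A T → S.card = T.card

/-- The closed neighbourhood of `x` deleted from `A`: the vertices of `A` distinct from `x`
and not adjacent to `x`. -/
noncomputable def delClosedNbhd (G : SimpleGraph V) (A : Finset V) (x : V) : Finset V :=
  A.filter fun y => y ≠ x ∧ ¬ G.Adj x y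

/-- The induced subgraph of `G` on the vertex set `A` is vertex decomposable: it is
well-covered, and either it has no edges, or some vertex `x ∈ A` is such that deleting `x`,
respectively the closed neighbourhood of `x`, leaves a vertex decomposable graph. -/
def VertexDecomposableOn (G : SimpleGraph V) (A : Finset V) : Prop :=
  WellCoveredOn G A ∧
    ((∀ u ∈ A, ∀ v ∈ A, ¬ G.Adj u v) ∨
      ∃ x, ∃ _h : x ∈ A,
        VertexDecomposableOn G (A.erase x) ∧
        VertexDecomposableOn G (delClosedNbhd G A x))
termination_by A.card
decreasing_by
  · exact Finset.card_erase_lt_of_mem (by assumption)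
  · exact Finset.card_lt_card
      (Finset.filter_ssubset.mpr ⟨x, by assumption, by simp⟩)

/-- A finite simple graph is well-covered if all of its maximal independent sets have the
same cardinality. -/
def WellCovered (G : SimpleGraph V) [Fintype V] : Prop :=
  WellCoveredOn G Finset.univ

/-- A finite simple graph is vertex decomposable. -/
def VertexDecomposable (G : SimpleGraph V) [Fintype V] : Prop :=
  VertexDecomposableOn G Finset.univ

/-- The set of shedding vertices of `G` : those vertices `x` such that both `G \ x` and
`G \ N[x]` are vertex decomposable. -/
def Shed (G : SimpleGraph V) [Fintype V] : Set V :=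
  {x | VertexDecomposableOn G (Finset.univ.erase x) ∧
       VertexDecomposableOn G (delClosedNbhd G Finset.univ x)}

/-- `D` is a dominating set of `G`: every vertex not in `D` is adjacent to a vertex of `D`. -/
def IsDominatingSet (G : SimpleGraph V) (D : Set V) : Prop :=
  ∀ v, v ∉ D → ∃ u ∈ D, G.Adj u v

/-- A vertex is simplicial if its neighbourhood induces a clique. -/
def IsSimplicialVertex (G : SimpleGraph V) (x : V) : Prop :=
  ∀ u v, G.Adj x u → G.Adj x v → u ≠ v → G.Adj u v

/-- The (0-indexed) vertices `a` and `b` of `X` lie in the same complete bipartite block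
`K_{k i, k i}`: block `i` occupies the indices in `[2 * (k 0 + ⋯ + k (i-1)), 2 * (k 0 + ⋯ + k i))`. -/
def SameBlock (m : ℕ) (k : ℕ → ℕ) (a b : ℕ) : Prop :=
  ∃ i < m, 2 * (∑ j ∈ Finset.range i, k j) ≤ a ∧ a < 2 * (∑ j ∈ Finset.range (i + 1), k j) ∧
           2 * (∑ j ∈ Finset.range i, k j) ≤ b ∧ b < 2 * (∑ j ∈ Finset.range (i + 1), k j)

/-- The graph `D_n(k 0, …, k (m-1))` on the `5n` vertices `X ⊕ Y ⊕ Z` (all 0-indexed, so the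
paper's `x_j` is `Sum.inl (j-1)`, `y_j` is `Sum.inr (Sum.inl (j-1))` and `z_j` is
`Sum.inr (Sum.inr (j-1))`).  Its edges are exactly: `Z` induces a complete graph `K n`;
`Y` is independent; `X` induces the disjoint union `K_{k 0,k 0} ⊔ ⋯ ⊔ K_{k (m-1),k (m-1)}`,
where within each block the bipartition is by the parity of the index; `x_j` is adjacent to
`y_j`; and `z_c` is adjacent to `y_{2c}` and `y_{2c+1}`. -/
def Dgraph (m : ℕ) (k : ℕ → ℕ) (n : ℕ) :
    SimpleGraph (Fin (2 * n) ⊕ Fin (2 * n) ⊕ Fin n) :=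
  SimpleGraph.fromRel fun p q =>
    match p, q with
    | Sum.inl a, Sum.inl b => SameBlock m k a.val b.val ∧ a.val % 2 ≠ b.val % 2
    | Sum.inl a, Sum.inr (Sum.inl b) => a.val = b.val
    | Sum.inr (Sum.inr c), Sum.inr (Sum.inl b) => b.val = 2 * c.val ∨ b.val = 2 * c.val + 1
    | Sum.inr (Sum.inr c), Sum.inr (Sum.inr d) => c ≠ d
    | _, _ => False

/-!
The vertex `x_1` is not dominated by `Shed G`: its closed neighbourhood lies in `X ∪ Y`, and for
no `u ∈ X ∪ Y` is `G \ u` even well-covered.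

Taking from each edge `x_j y_j` the `x` if `j` has a fixed parity and the `y` otherwise gives a
maximal independent set of size `2n`; for one of the two parities it avoids `u`, so it stays
maximal in `G \ u`. Trading in such a set the vertex of a pair `{y_{2c-1}, y_{2c}}` for `z_c`
keeps the size `2n`, and the parity and `c` can be chosen so that the new set contains `u` while
every neighbour of `u` outside it has a second neighbour in it (a vertex of `X` has two
neighbours in its block as `k_i ≥ 2`, and `Z` has a second vertex as `n ≥ 2`). Removing `u` then
leaves a maximal independent set of `G \ u` of size `2n - 1`.
-/

section IndependentSets

variable {G : SimpleGraph V} {A S T : Finset V} {u : V}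

theorem isMaxIndepIn_iff :
    IsMaxIndepIn G A S ↔ IsIndepIn G A S ∧ ∀ v ∈ A, v ∉ S → ∃ w ∈ S, G.Adj v w := by
  refine ⟨fun ⟨hS, hmax⟩ => ⟨hS, fun v hvA hvS => ?_⟩, fun ⟨hS, hdom⟩ => ⟨hS, ?_⟩⟩
  · by_contra! hfree
    have hins : IsIndepIn G A (insert v S) := by
      refine ⟨Finset.insert_subset hvA hS.1, ?_⟩
      simp only [Finset.mem_insert]
      rintro a (rfl | ha) b (rfl | hb)
      · exact G.irrefl
      · exact hfree b hb
      · exact fun h => hfree a ha h.symm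
      · exact hS.2 a ha b hb
    exact hvS (hmax _ hins (Finset.subset_insert v S) ▸ Finset.mem_insert_self v S)
  · intro T hT hST
    refine Finset.Subset.antisymm (fun v hvT => ?_) hST
    by_contra hvS
    obtain ⟨w, hwS, hvw⟩ := hdom v (hT.1 hvT) hvS
    exact hT.2 v hvT w (hST hwS) hvw

variable [DecidableEq V]

theorem IsMaxIndepIn.erase_of_notMem (h : IsMaxIndepIn G A S) (hu : u ∉ S) :
    IsMaxIndepIn G (A.erase u) S := by
  obtain ⟨⟨hSA, hS⟩, hdom⟩ := isMaxIndepIn_iff.1 h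
  refine isMaxIndepIn_iff.2
    ⟨⟨fun v hv => ?_, hS⟩, fun v hv => hdom v (Finset.mem_of_mem_erase hv)⟩
  exact Finset.mem_erase.2 ⟨fun e => hu (e ▸ hv), hSA hv⟩

theorem IsMaxIndepIn.erase_of_mem (h : IsMaxIndepIn G A S)
    (hnbr : ∀ v ∈ A, v ∉ S → G.Adj v u → ∃ w ∈ S, w ≠ u ∧ G.Adj v w) :
    IsMaxIndepIn G (A.erase u) (S.erase u) := by
  obtain ⟨⟨hSA, hS⟩, hdom⟩ := isMaxIndepIn_iff.1 h
  refine isMaxIndepIn_iff.2 ⟨⟨Finset.erase_subset_erase u hSA,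
    fun a ha b hb => hS a (Finset.mem_of_mem_erase ha) b (Finset.mem_of_mem_erase hb)⟩, ?_⟩
  intro v hv hvS
  obtain ⟨hvu, hvA⟩ := Finset.mem_erase.1 hv
  have hvS' : v ∉ S := fun h => hvS (Finset.mem_erase.2 ⟨hvu, h⟩)
  obtain ⟨w, hwS, hvw⟩ := hdom v hvA hvS'
  by_cases hwu : w = u
  · obtain ⟨w', hw'S, hw'u, hvw'⟩ := hnbr v hvA hvS' (hwu ▸ hvw)
    exact ⟨w', Finset.mem_erase.2 ⟨hw'u, hw'S⟩, hvw'⟩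
  · exact ⟨w, Finset.mem_erase.2 ⟨hwu, hwS⟩, hvw⟩

theorem not_wellCoveredOn_erase {W : Finset V} (hT : IsMaxIndepIn G A T) (huT : u ∉ T)
    (hW : IsMaxIndepIn G A W) (huW : u ∈ W)
    (hnbr : ∀ v ∈ A, v ∉ W → G.Adj v u → ∃ w ∈ W, w ≠ u ∧ G.Adj v w)
    (hcard : W.card = T.card) :
    ¬ WellCoveredOn G (A.erase u) := by
  intro hwc
  have := hwc _ _ (hW.erase_of_mem hnbr) (hT.erase_of_notMem huT)
  rw [Finset.card_erase_of_mem huW, hcard] at this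
  have : 0 < T.card := hcard ▸ Finset.card_pos.2 ⟨u, huW⟩
  omega

theorem wellCoveredOn_erase_of_mem_shed [Fintype V] {x : V} (hx : x ∈ Shed G) :
    WellCoveredOn G (Finset.univ.erase x) := by
  have h := hx.1
  rw [VertexDecomposableOn] at h
  convert h.1

end IndependentSets

theorem SameBlock.symm {m : ℕ} {k : ℕ → ℕ} {a b : ℕ} (h : SameBlock m k a b) :
    SameBlock m k b a :=
  let ⟨i, hi, ha, ha', hb, hb'⟩ := h
  ⟨i, hi, hb, hb', ha, ha'⟩

theorem exists_sum_range_le_lt (k : ℕ → ℕ) {m t : ℕ} (ht : t < ∑ j ∈ Finset.range m, k j) :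
    ∃ i < m, ∑ j ∈ Finset.range i, k j ≤ t ∧ t < ∑ j ∈ Finset.range (i + 1), k j := by
  induction m with
  | zero => simp at ht
  | succ m ih =>
    by_cases h : t < ∑ j ∈ Finset.range m, k j
    · obtain ⟨i, hi, hlo, hhi⟩ := ih h
      exact ⟨i, hi.trans (Nat.lt_succ_self m), hlo, hhi⟩
    · exact ⟨m, Nat.lt_succ_self m, Nat.le_of_not_lt h, ht⟩

namespace Dgraph

variable {m : ℕ} {k : ℕ → ℕ} {n q : ℕ}

section Adjacency

variable {a b : Fin (2 * n)} {c d : Fin n}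

@[simp] theorem adj_inl_inl :
    (Dgraph m k n).Adj (.inl a) (.inl b) ↔ SameBlock m k a b ∧ a.val % 2 ≠ b.val % 2 := by
  simp only [Dgraph, SimpleGraph.fromRel_adj]
  refine ⟨?_, fun h => ⟨fun e => h.2 (by cases e; rfl), Or.inl h⟩⟩
  rintro ⟨-, h | h⟩
  · exact h
  · exact ⟨h.1.symm, fun e => h.2 e.symm⟩

@[simp] theorem adj_inl_inr_inl :
    (Dgraph m k n).Adj (.inl a) (.inr (.inl b)) ↔ a.val = b.val := by
  simp [Dgraph]

@[simp] theorem adj_inr_inl_inl :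
    (Dgraph m k n).Adj (.inr (.inl b)) (.inl a) ↔ a.val = b.val := by
  simp [Dgraph]

@[simp] theorem not_adj_inl_inr_inr : ¬ (Dgraph m k n).Adj (.inl a) (.inr (.inr c)) := by
  simp [Dgraph]

@[simp] theorem not_adj_inr_inr_inl : ¬ (Dgraph m k n).Adj (.inr (.inr c)) (.inl a) := by
  simp [Dgraph]

@[simp] theorem not_adj_inr_inl_inr_inl :
    ¬ (Dgraph m k n).Adj (.inr (.inl a)) (.inr (.inl b)) := by
  simp [Dgraph]

@[simp] theorem adj_inr_inl_inr_inr :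
    (Dgraph m k n).Adj (.inr (.inl b)) (.inr (.inr c)) ↔ b.val / 2 = c.val := by
  simp [Dgraph]
  omega

@[simp] theorem adj_inr_inr_inr_inl :
    (Dgraph m k n).Adj (.inr (.inr c)) (.inr (.inl b)) ↔ b.val / 2 = c.val := by
  simp [Dgraph]
  omega

@[simp] theorem adj_inr_inr_inr_inr :
    (Dgraph m k n).Adj (.inr (.inr c)) (.inr (.inr d)) ↔ c ≠ d := by
  simp +contextual [Dgraph]

end Adjacency

theorem exists_adj_inl_ne (hk : ∀ i < m, 2 ≤ k i) (hn : n = ∑ i ∈ Finset.range m, k i)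
    (j a : Fin (2 * n)) : ∃ j', j' ≠ a ∧ (Dgraph m k n).Adj (.inl j) (.inl j') := by
  obtain ⟨i, hi, hlo, hhi⟩ := exists_sum_range_le_lt k (m := m) (t := j.val / 2) (by omega)
  rw [Finset.sum_range_succ] at hhi
  have hki := hk i hi
  have hblock : ∑ l ∈ Finset.range i, k l + k i ≤ n :=
    hn ▸ Finset.sum_range_succ k i ▸ Finset.sum_le_sum_of_subset (Finset.range_subset_range.2 hi)
  have hpartner : ∀ t, t = 2 * ∑ l ∈ Finset.range i, k l + (1 - j.val % 2) ∨
      t = 2 * ∑ l ∈ Finset.range i, k l + (1 - j.val % 2) + 2 →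
      ∃ ht : t < 2 * n, (Dgraph m k n).Adj (.inl j) (.inl ⟨t, ht⟩) := fun t ht =>
    ⟨by omega, by
      simp only [adj_inl_inl, SameBlock, Finset.sum_range_succ]
      exact ⟨⟨i, hi, by omega⟩, by omega⟩⟩
  by_cases ha : a.val = 2 * ∑ l ∈ Finset.range i, k l + (1 - j.val % 2)
  · obtain ⟨ht, hadj⟩ := hpartner _ (.inr rfl)
    exact ⟨_, fun e => by rw [← e] at ha; simp at ha, hadj⟩
  · obtain ⟨ht, hadj⟩ := hpartner _ (.inl rfl)
    exact ⟨_, fun e => ha (by rw [← e]), hadj⟩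

noncomputable def parityIndep (n q : ℕ) : Finset (Fin (2 * n) ⊕ Fin (2 * n) ⊕ Fin n) :=
  Finset.univ.filter fun
    | .inl j => j.val % 2 = q
    | .inr (.inl j) => j.val % 2 ≠ q
    | .inr (.inr _) => False

/-- `parityIndep n q` with its vertex in the pair `{y_{2c}, y_{2c+1}}` traded for `z_c`. -/
noncomputable def parityIndepSwap (n q : ℕ) (c : Fin n) :
    Finset (Fin (2 * n) ⊕ Fin (2 * n) ⊕ Fin n) :=
  Finset.univ.filter fun
    | .inl j => j.val % 2 = q
    | .inr (.inl j) => j.val % 2 ≠ q ∧ j.val / 2 ≠ c.val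
    | .inr (.inr e) => e = c

theorem card_parityIndep : (parityIndep n q).card = 2 * n := by
  refine ((Finset.card_fin (2 * n)).symm.trans <| Finset.card_nbij' (t := parityIndep n q)
    (fun j => if j.val % 2 = q then Sum.inl j else Sum.inr (Sum.inl j))
    (Sum.elim id (Sum.elim id fun e => ⟨2 * e.val, by omega⟩))
    ?_ ?_ ?_ ?_).symm
  · intro j _
    by_cases h : j.val % 2 = q <;> simp [parityIndep, h]
  · simp
  · intro j _
    by_cases h : j.val % 2 = q <;> simp [h]
  · rintro (j | j | e) h <;> simp_all [parityIndep]

theorem card_parityIndepSwap (hq : q < 2) (c : Fin n) :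
    (parityIndepSwap n q c).card = (parityIndep n q).card := by
  have : parityIndepSwap n q c = insert (.inr (.inr c))
      ((parityIndep n q).erase (.inr (.inl ⟨2 * c.val + (1 - q), by omega⟩))) := by
    ext (j | j | e) <;> simp [parityIndep, parityIndepSwap, Fin.ext_iff]
    all_goals omega
  rw [this, Finset.card_insert_of_notMem (by simp [parityIndep]),
    Finset.card_erase_add_one (by simp [parityIndep]; omega)]

theorem isMaxIndepIn_parityIndep (hk : ∀ i < m, 2 ≤ k i) (hn : n = ∑ i ∈ Finset.range m, k i)
    (hq : q < 2) : IsMaxIndepIn (Dgraph m k n) Finset.univ (parityIndep n q) := by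
  refine isMaxIndepIn_iff.2 ⟨⟨Finset.subset_univ _, ?_⟩, ?_⟩
  · rintro (j | j | e) hu (j' | j' | e') hv hadj <;> simp_all [parityIndep]
  · rintro (j | j | e) - hv <;> simp only [parityIndep, Finset.mem_filter, Finset.mem_univ,
      true_and, not_not] at hv
    · obtain ⟨j', -, hadj⟩ := exists_adj_inl_ne hk hn j j
      refine ⟨.inl j', ?_, hadj⟩
      simp only [adj_inl_inl] at hadj
      simp [parityIndep]
      omega
    · exact ⟨.inl j, by simp [parityIndep, hv], by simp⟩
    · refine ⟨.inr (.inl ⟨2 * e.val + (1 - q), by omega⟩), ?_, by simp; omega⟩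
      simp [parityIndep]
      omega

theorem isMaxIndepIn_parityIndepSwap (hk : ∀ i < m, 2 ≤ k i)
    (hn : n = ∑ i ∈ Finset.range m, k i) (hq : q < 2) (c : Fin n) :
    IsMaxIndepIn (Dgraph m k n) Finset.univ (parityIndepSwap n q c) := by
  refine isMaxIndepIn_iff.2 ⟨⟨Finset.subset_univ _, ?_⟩, ?_⟩
  · rintro (j | j | e) hu (j' | j' | e') hv hadj <;> simp_all [parityIndepSwap]
  · rintro (j | j | e) - hv <;> simp only [parityIndepSwap, Finset.mem_filter, Finset.mem_univ,
      true_and] at hv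
    · obtain ⟨j', -, hadj⟩ := exists_adj_inl_ne hk hn j j
      refine ⟨.inl j', ?_, hadj⟩
      simp only [adj_inl_inl] at hadj
      simp [parityIndepSwap]
      omega
    · by_cases hjq : j.val % 2 = q
      · exact ⟨.inl j, by simp [parityIndepSwap, hjq], by simp⟩
      · exact ⟨.inr (.inr c), by simp [parityIndepSwap], by simp; omega⟩
    · exact ⟨.inr (.inr c), by simp [parityIndepSwap], by simpa using hv⟩

theorem not_wellCoveredOn_erase_inl (hk : ∀ i < m, 2 ≤ k i)
    (hn : n = ∑ i ∈ Finset.range m, k i) (a : Fin (2 * n)) :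
    ¬ WellCoveredOn (Dgraph m k n) (Finset.univ.erase (.inl a)) := by
  have hq : a.val % 2 < 2 := Nat.mod_lt _ two_pos
  refine not_wellCoveredOn_erase (isMaxIndepIn_parityIndep hk hn (q := 1 - a.val % 2) (by omega))
    (by simp [parityIndep]; omega) (isMaxIndepIn_parityIndepSwap hk hn hq ⟨a.val / 2, by omega⟩)
    (by simp [parityIndepSwap]) ?_
    (by rw [card_parityIndepSwap hq, card_parityIndep, card_parityIndep])
  rintro (j | j | e) - hv hadj
  · obtain ⟨j', hj'a, hjj'⟩ := exists_adj_inl_ne hk hn j a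
    refine ⟨.inl j', ?_, by simpa using hj'a, hjj'⟩
    simp only [adj_inl_inl] at hadj hjj'
    simp [parityIndepSwap]
    omega
  · refine ⟨.inr (.inr ⟨a.val / 2, by omega⟩), by simp [parityIndepSwap], by simp, ?_⟩
    simp only [adj_inr_inl_inl] at hadj
    simp [hadj]
  · simp at hadj

theorem not_wellCoveredOn_erase_inr_inl (hk : ∀ i < m, 2 ≤ k i)
    (hn : n = ∑ i ∈ Finset.range m, k i) (hn2 : 2 ≤ n) (b : Fin (2 * n)) :
    ¬ WellCoveredOn (Dgraph m k n) (Finset.univ.erase (.inr (.inl b))) := by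
  have hq : b.val % 2 < 2 := Nat.mod_lt _ two_pos
  obtain ⟨d, hd⟩ : ∃ d : Fin n, d.val ≠ b.val / 2 :=
    if h : b.val / 2 = 0 then ⟨⟨1, by omega⟩, by simp [h]⟩ else ⟨⟨0, by omega⟩, Ne.symm h⟩
  refine not_wellCoveredOn_erase (isMaxIndepIn_parityIndep hk hn hq) (by simp [parityIndep])
    (isMaxIndepIn_parityIndepSwap hk hn (q := 1 - b.val % 2) (by omega) d)
    (by simp [parityIndepSwap]; omega) ?_
    (by rw [card_parityIndepSwap (by omega), card_parityIndep, card_parityIndep])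
  rintro (j | j | e) - hv hadj
  · obtain ⟨j', -, hjj'⟩ := exists_adj_inl_ne hk hn j j
    refine ⟨.inl j', ?_, by simp, hjj'⟩
    simp only [adj_inl_inl] at hjj'
    simp only [adj_inl_inr_inl] at hadj
    simp [parityIndepSwap]
    omega
  · simp at hadj
  · refine ⟨.inr (.inr d), by simp [parityIndepSwap], by simp, ?_⟩
    simp only [adj_inr_inr_inr_inl] at hadj
    simp only [adj_inr_inr_inr_inr]
    omega

end Dgraph

/-- For the graph `D_n(k_1, …, k_m)`, the set of shedding vertices is not a
dominating set. -/
theorem statement14 (m : ℕ) (hm : 1 ≤ m) (k : ℕ → ℕ) (hk : ∀ i < m, 2 ≤ k i)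
    (n : ℕ) (hn : n = ∑ i ∈ Finset.range m, k i) :
    ¬ IsDominatingSet (Dgraph m k n) (Shed (Dgraph m k n)) := by
  have hn2 : 2 ≤ n := hn ▸ (hk 0 hm).trans
    (Finset.single_le_sum (fun i _ => Nat.zero_le (k i)) (Finset.mem_range.2 hm))
  have not_shed_inl (a : Fin (2 * n)) : .inl a ∉ Shed (Dgraph m k n) := fun ha =>
    Dgraph.not_wellCoveredOn_erase_inl hk hn a (wellCoveredOn_erase_of_mem_shed ha)
  intro hdom
  obtain ⟨u, hu, hadj⟩ := hdom (.inl ⟨0, by omega⟩) (not_shed_inl _)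
  rcases u with a | b | c
  · exact not_shed_inl a hu
  · exact Dgraph.not_wellCoveredOn_erase_inr_inl hk hn hn2 b (wellCoveredOn_erase_of_mem_shed hu)
  · simp at hadj
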